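/- Suppose the covariance matrix of f(Y) under μ2 (i.e., ∫ f fᵀ dμ2 − (∫ f dμ2)(∫ f dμ2)ᵀ) is positive definite. Then for every λ ∈ ℝ^M the conditional covariance matrix Σ^λ, defined by Σ^λ = E^λ[ f(Y) f(Y)ᵀ ] − E^λ[ E^λ[f(Y)|X] E^λ[f(Y)|X]ᵀ ] where X ∼ μ1 and Y|X=x ∼ T^λ(x,·), is positive definite (full rank): if v ∈ ℝ^M satisfies vᵀ Σ^λ v = 0 then v = 0. -/

import Mathlib

open MeasureTheory ProbabilityTheory Real Matrix
open scoped ENNReal Classical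

/-- `ℓ₀^λ(x,y) = λᵀ f̃(y) − c(x,y)`. -/
noncomputable def ell0 {M : ℕ} {X : Type*} (c : X → X → ℝ) (f : X → Fin M → ℝ)
    (r lam : Fin M → ℝ) (x y : X) : ℝ :=
  (∑ i, lam i * (f y i - r i)) - c x y

/-- `B_{λ,ε}(x) = ε log ∫ exp(ε⁻¹ ℓ₀^λ(x,y)) μ2(dy)`. -/
noncomputable def Bfun {M : ℕ} {X : Type*} [MeasurableSpace X] (c : X → X → ℝ)
    (f : X → Fin M → ℝ) (r lam : Fin M → ℝ) (μ2 : Measure X) (ε : ℝ) (x : X) : ℝ :=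
  ε * Real.log (∫ y, Real.exp (ε⁻¹ * ell0 c f r lam x y) ∂μ2)

/-- The tilted kernel `T^λ(x,dy) = μ2(dy) exp(ε⁻¹ (ℓ₀^λ(x,y) − B_{λ,ε}(x)))`. -/
noncomputable def tiltedKernel {M : ℕ} {X : Type*} [MeasurableSpace X] (c : X → X → ℝ)
    (f : X → Fin M → ℝ) (r lam : Fin M → ℝ) (μ2 : Measure X) (ε : ℝ) (x : X) : Measure X :=
  μ2.withDensity fun y =>
    ENNReal.ofReal (Real.exp (ε⁻¹ * (ell0 c f r lam x y - Bfun c f r lam μ2 ε x)))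

section Aux

open scoped NNReal

variable {M : ℕ} {X : Type*} [MetricSpace X] [CompactSpace X] [MeasurableSpace X] [BorelSpace X]
variable {c : X → X → ℝ} {f : X → Fin M → ℝ} {r lam : Fin M → ℝ} {μ2 : Measure X} {ε : ℝ}

/-- Continuous functions on a compact space are integrable for finite measures. -/
lemma cont_integrable {φ : X → ℝ} (hφ : Continuous φ) (ν : Measure X) [IsFiniteMeasure ν] :
    Integrable φ ν :=
  hφ.integrable_of_hasCompactSupport (HasCompactSupport.of_compactSpace φ)

/-- Continuous functions on a compact space are bounded. -/
lemma cont_bound {φ : X → ℝ} (hφ : Continuous φ) : ∃ C, 0 ≤ C ∧ ∀ y, |φ y| ≤ C := by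
  obtain ⟨C, hC⟩ := isCompact_univ.exists_bound_of_continuousOn hφ.continuousOn
  refine ⟨max C 0, le_max_right _ _, fun y => ?_⟩
  have := hC y (Set.mem_univ y)
  rw [Real.norm_eq_abs] at this
  exact this.trans (le_max_left _ _)

lemma ell0_cont (hc : Continuous fun p : X × X => c p.1 p.2) (hf : Continuous f) :
    Continuous fun p : X × X => ell0 c f r lam p.1 p.2 := by
  unfold ell0
  exact (continuous_finset_sum _ fun i _ => continuous_const.mul
    (((continuous_apply i).comp (hf.comp continuous_snd)).sub continuous_const)).sub hc

lemma exp_cont (hc : Continuous fun p : X × X => c p.1 p.2) (hf : Continuous f) :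
    Continuous fun p : X × X => Real.exp (ε⁻¹ * ell0 c f r lam p.1 p.2) :=
  Real.continuous_exp.comp (continuous_const.mul (ell0_cont hc hf))

lemma exp_cont_x (hc : Continuous fun p : X × X => c p.1 p.2) (hf : Continuous f) (x : X) :
    Continuous fun y => Real.exp (ε⁻¹ * ell0 c f r lam x y) := by
  apply Real.continuous_exp.comp
  apply continuous_const.mul
  unfold ell0
  apply Continuous.sub
  · exact continuous_finset_sum _ fun i _ => continuous_const.mul
      (((continuous_apply i).comp hf).sub continuous_const)
  · exact hc.comp (continuous_const.prodMk continuous_id)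

lemma J1_pos [IsProbabilityMeasure μ2] (hc : Continuous fun p : X × X => c p.1 p.2)
    (hf : Continuous f) (x : X) :
    0 < ∫ y, Real.exp (ε⁻¹ * ell0 c f r lam x y) ∂μ2 := by
  rw [integral_pos_iff_support_of_nonneg (fun y => (Real.exp_pos _).le)
    (cont_integrable (exp_cont_x hc hf x) μ2)]
  have : (Function.support fun y => Real.exp (ε⁻¹ * ell0 c f r lam x y)) = Set.univ :=
    Set.eq_univ_of_forall fun y => (Real.exp_pos _).ne'
  rw [this, measure_univ]
  exact one_pos

lemma exp_B [IsProbabilityMeasure μ2] (hc : Continuous fun p : X × X => c p.1 p.2)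
    (hf : Continuous f) (hε : 0 < ε) (x : X) :
    Real.exp (ε⁻¹ * Bfun c f r lam μ2 ε x) = ∫ y, Real.exp (ε⁻¹ * ell0 c f r lam x y) ∂μ2 := by
  rw [Bfun, ← mul_assoc, inv_mul_cancel₀ hε.ne', one_mul, Real.exp_log (J1_pos hc hf x)]

lemma tilted_integral [IsProbabilityMeasure μ2] (hc : Continuous fun p : X × X => c p.1 p.2)
    (hf : Continuous f) (hε : 0 < ε) (x : X) (h : X → ℝ) :
    ∫ y, h y ∂(tiltedKernel c f r lam μ2 ε x)
      = (∫ y, Real.exp (ε⁻¹ * ell0 c f r lam x y) * h y ∂μ2)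
        / (∫ y, Real.exp (ε⁻¹ * ell0 c f r lam x y) ∂μ2) := by
  have hell : Continuous fun y => ell0 c f r lam x y := by
    unfold ell0
    apply Continuous.sub
    · exact continuous_finset_sum _ fun i _ => continuous_const.mul
        (((continuous_apply i).comp hf).sub continuous_const)
    · exact hc.comp (continuous_const.prodMk continuous_id)
  have hdcont : Continuous fun y =>
      Real.exp (ε⁻¹ * (ell0 c f r lam x y - Bfun c f r lam μ2 ε x)) :=
    Real.continuous_exp.comp (continuous_const.mul (hell.sub continuous_const))
  have hd : Measurable fun y =>
      Real.toNNReal (Real.exp (ε⁻¹ * (ell0 c f r lam x y - Bfun c f r lam μ2 ε x))) :=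
    (continuous_real_toNNReal.comp hdcont).measurable
  rw [show tiltedKernel c f r lam μ2 ε x = μ2.withDensity (fun y =>
      ((Real.toNNReal (Real.exp (ε⁻¹ * (ell0 c f r lam x y - Bfun c f r lam μ2 ε x))) : ℝ≥0)
        : ℝ≥0∞)) from rfl,
    integral_withDensity_eq_integral_smul hd]
  have hpt : ∀ y, (Real.toNNReal
        (Real.exp (ε⁻¹ * (ell0 c f r lam x y - Bfun c f r lam μ2 ε x)))) • h y
      = (Real.exp (ε⁻¹ * ell0 c f r lam x y) * h y)
        / (∫ y, Real.exp (ε⁻¹ * ell0 c f r lam x y) ∂μ2) := by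
    intro y
    rw [NNReal.smul_def, Real.coe_toNNReal _ (Real.exp_pos _).le, smul_eq_mul, mul_sub,
      Real.exp_sub, exp_B hc hf hε x]
    ring
  rw [integral_congr_ae (Filter.Eventually.of_forall hpt), integral_div]

lemma tilted_prob [IsProbabilityMeasure μ2] (hc : Continuous fun p : X × X => c p.1 p.2)
    (hf : Continuous f) (hε : 0 < ε) (x : X) :
    IsProbabilityMeasure (tiltedKernel c f r lam μ2 ε x) := by
  constructor
  have hell : Continuous fun y => ell0 c f r lam x y := by
    unfold ell0
    apply Continuous.sub
    · exact continuous_finset_sum _ fun i _ => continuous_const.mul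
        (((continuous_apply i).comp hf).sub continuous_const)
    · exact hc.comp (continuous_const.prodMk continuous_id)
  have hdcont : Continuous fun y =>
      Real.exp (ε⁻¹ * (ell0 c f r lam x y - Bfun c f r lam μ2 ε x)) :=
    Real.continuous_exp.comp (continuous_const.mul (hell.sub continuous_const))
  rw [tiltedKernel, withDensity_apply _ MeasurableSet.univ, Measure.restrict_univ,
    ← ofReal_integral_eq_lintegral_ofReal (cont_integrable hdcont μ2)
      (Filter.Eventually.of_forall fun y => (Real.exp_pos _).le)]
  have : ∫ y, Real.exp (ε⁻¹ * (ell0 c f r lam x y - Bfun c f r lam μ2 ε x)) ∂μ2 = 1 := by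
    have hpt : ∀ y, Real.exp (ε⁻¹ * (ell0 c f r lam x y - Bfun c f r lam μ2 ε x))
        = Real.exp (ε⁻¹ * ell0 c f r lam x y)
          / (∫ y, Real.exp (ε⁻¹ * ell0 c f r lam x y) ∂μ2) := by
      intro y
      rw [mul_sub, Real.exp_sub, exp_B hc hf hε x]
    rw [integral_congr_ae (Filter.Eventually.of_forall hpt), integral_div,
      div_self (J1_pos hc hf x).ne']
  rw [this, ENNReal.ofReal_one]

lemma tilted_ae [IsProbabilityMeasure μ2] (hc : Continuous fun p : X × X => c p.1 p.2)
    (hf : Continuous f) (x : X) {P : X → Prop}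
    (hP : ∀ᵐ y ∂(tiltedKernel c f r lam μ2 ε x), P y) : ∀ᵐ y ∂μ2, P y := by
  have hell : Continuous fun y => ell0 c f r lam x y := by
    unfold ell0
    apply Continuous.sub
    · exact continuous_finset_sum _ fun i _ => continuous_const.mul
        (((continuous_apply i).comp hf).sub continuous_const)
    · exact hc.comp (continuous_const.prodMk continuous_id)
  have hdcont : Continuous fun y =>
      Real.exp (ε⁻¹ * (ell0 c f r lam x y - Bfun c f r lam μ2 ε x)) :=
    Real.continuous_exp.comp (continuous_const.mul (hell.sub continuous_const))
  have hd : Measurable fun y =>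
      ENNReal.ofReal (Real.exp (ε⁻¹ * (ell0 c f r lam x y - Bfun c f r lam μ2 ε x))) :=
    ENNReal.measurable_ofReal.comp hdcont.measurable
  unfold tiltedKernel at hP
  rw [ae_withDensity_iff hd] at hP
  filter_upwards [hP] with y hy
  exact hy (ENNReal.ofReal_pos.mpr (Real.exp_pos _)).ne'

lemma tilted_meas [IsProbabilityMeasure μ2] (hc : Continuous fun p : X × X => c p.1 p.2)
    (hf : Continuous f) (hε : 0 < ε) {h : X → ℝ} (hh : Continuous h) :
    StronglyMeasurable fun x => ∫ y, h y ∂(tiltedKernel c f r lam μ2 ε x) := by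
  have heq : (fun x => ∫ y, h y ∂(tiltedKernel c f r lam μ2 ε x))
      = fun x => (∫ y, Real.exp (ε⁻¹ * ell0 c f r lam x y) * h y ∂μ2)
        / (∫ y, Real.exp (ε⁻¹ * ell0 c f r lam x y) ∂μ2) :=
    funext fun x => tilted_integral hc hf hε x h
  rw [heq]
  have h1 : StronglyMeasurable fun x => ∫ y, Real.exp (ε⁻¹ * ell0 c f r lam x y) * h y ∂μ2 :=
    (Continuous.stronglyMeasurable
      ((exp_cont hc hf).mul (hh.comp continuous_snd))).integral_prod_right'
  have h2 : StronglyMeasurable fun x => ∫ y, Real.exp (ε⁻¹ * ell0 c f r lam x y) ∂μ2 :=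
    (Continuous.stronglyMeasurable (exp_cont hc hf)).integral_prod_right'
  exact (h1.measurable.div h2.measurable).stronglyMeasurable

lemma tilted_bdd [IsProbabilityMeasure μ2] (hc : Continuous fun p : X × X => c p.1 p.2)
    (hf : Continuous f) (hε : 0 < ε) (h : X → ℝ) (C : ℝ) (hC : ∀ y, |h y| ≤ C) (x : X) :
    |∫ y, h y ∂(tiltedKernel c f r lam μ2 ε x)| ≤ C := by
  haveI := tilted_prob (lam := lam) (r := r) (μ2 := μ2) hc hf hε x
  have := norm_integral_le_of_norm_le_const (μ := tiltedKernel c f r lam μ2 ε x) (f := h)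
    (C := C) (Filter.Eventually.of_forall fun y => by rw [Real.norm_eq_abs]; exact hC y)
  rwa [Real.norm_eq_abs, probReal_univ, mul_one] at this

/-- Bilinear expansion of the variance quadratic form. -/
lemma var_expand (hf : Continuous f) (v : Fin M → ℝ) (ν : Measure X) [IsFiniteMeasure ν] :
    (∫ y, (∑ i, v i * f y i) * (∑ i, v i * f y i) ∂ν)
      - (∫ y, ∑ i, v i * f y i ∂ν) * (∫ y, ∑ i, v i * f y i ∂ν)
      = ∑ i, ∑ j, v i * v j *
        ((∫ y, f y i * f y j ∂ν) - (∫ y, f y i ∂ν) * (∫ y, f y j ∂ν)) := by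
  have hfi : ∀ i, Continuous fun y => f y i := fun i => (continuous_apply i).comp hf
  have int1 : ∀ i, Integrable (fun y => f y i) ν := fun i => cont_integrable (hfi i) ν
  have int2 : ∀ i j, Integrable (fun y => f y i * f y j) ν :=
    fun i j => cont_integrable ((hfi i).mul (hfi j)) ν
  have e1 : ∫ y, ∑ i, v i * f y i ∂ν = ∑ i, v i * ∫ y, f y i ∂ν := by
    rw [integral_finset_sum _ fun i _ => (int1 i).const_mul (v i)]
    exact Finset.sum_congr rfl fun i _ => integral_const_mul _ _
  have e2 : ∫ y, (∑ i, v i * f y i) * (∑ i, v i * f y i) ∂ν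
      = ∑ i, ∑ j, v i * v j * ∫ y, f y i * f y j ∂ν := by
    have hpt : ∀ y, (∑ i, v i * f y i) * (∑ i, v i * f y i)
        = ∑ i, ∑ j, v i * v j * (f y i * f y j) := by
      intro y; rw [Finset.sum_mul_sum]
      exact Finset.sum_congr rfl fun i _ => Finset.sum_congr rfl fun j _ => by ring
    rw [integral_congr_ae (Filter.Eventually.of_forall hpt),
      integral_finset_sum _ fun i _ => integrable_finset_sum _ fun j _ =>
        (int2 i j).const_mul _]
    refine Finset.sum_congr rfl fun i _ => ?_
    rw [integral_finset_sum _ fun j _ => (int2 i j).const_mul _]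
    exact Finset.sum_congr rfl fun j _ => integral_const_mul _ _
  rw [e1, e2, Finset.sum_mul_sum, ← Finset.sum_sub_distrib]
  refine Finset.sum_congr rfl fun i _ => ?_
  rw [← Finset.sum_sub_distrib]
  exact Finset.sum_congr rfl fun j _ => by ring

/-- If the variance is nonpositive, the function is a.e. equal to its mean. -/
lemma var_zero (ν : Measure X) [IsProbabilityMeasure ν] {g : X → ℝ}
    (hgi : Integrable g ν) (hggi : Integrable (fun y => g y * g y) ν)
    (hz : (∫ y, g y * g y ∂ν) - (∫ y, g y ∂ν) * (∫ y, g y ∂ν) ≤ 0) :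
    ∀ᵐ y ∂ν, g y = ∫ z, g z ∂ν := by
  set m := ∫ z, g z ∂ν with hm
  have h1 : (fun y => (g y - m) * (g y - m))
      = fun y => (g y * g y - (2 * m) * g y) + m * m := funext fun y => by ring
  have hsqi : Integrable (fun y => (g y - m) * (g y - m)) ν := by
    rw [h1]; exact (hggi.sub (hgi.const_mul (2 * m))).add (integrable_const _)
  have ha : Integrable (fun y => g y * g y - (2 * m) * g y) ν :=
    hggi.sub (hgi.const_mul (2 * m))
  have key : ∫ y, (g y - m) * (g y - m) ∂ν = (∫ y, g y * g y ∂ν) - m * m := by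
    rw [h1, integral_add ha (integrable_const _),
      integral_sub hggi (hgi.const_mul (2 * m)), integral_const_mul, integral_const,
      probReal_univ, ← hm]
    simp only [ENNReal.toReal_one, smul_eq_mul, one_mul]
    ring
  have h0 : ∫ y, (g y - m) * (g y - m) ∂ν = 0 :=
    le_antisymm (by rw [key]; linarith) (integral_nonneg fun y => mul_self_nonneg _)
  have := (integral_eq_zero_iff_of_nonneg (fun y => mul_self_nonneg (g y - m)) hsqi).mp h0
  filter_upwards [this] with y hy
  have h2 : (g y - m) * (g y - m) = 0 := hy
  have := mul_self_eq_zero.mp h2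
  linarith

lemma dot_mulVec_expand (A : Matrix (Fin M) (Fin M) ℝ) (v : Fin M → ℝ) :
    v ⬝ᵥ A.mulVec v = ∑ i, ∑ j, v i * v j * A i j := by
  simp only [dotProduct, Matrix.mulVec, Finset.mul_sum]
  exact Finset.sum_congr rfl fun i _ => Finset.sum_congr rfl fun j _ => by ring

end Aux

/-- (Lemma `t:HessRank`.) If the covariance matrix of `f` under `μ2` is
positive definite, then for every `λ ∈ ℝ^M` the conditional covariance matrix
`Σ^λ = E^λ[f(Y)f(Y)ᵀ] − E^λ[E^λ[f(Y)|X] E^λ[f(Y)|X]ᵀ]` (with `X ∼ μ1`,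
`Y|X=x ∼ T^λ(x,·)`) is positive definite; in particular `vᵀ Σ^λ v = 0` forces `v = 0`. -/
theorem stmt_9 {M : ℕ} {X : Type*} [MetricSpace X] [CompactSpace X]
    [MeasurableSpace X] [BorelSpace X]
    (c : X → X → ℝ) (hc : Continuous fun p : X × X => c p.1 p.2)
    (hc_nonneg : ∀ x y : X, 0 ≤ c x y) (hc_diag : ∀ x : X, c x x = 0)
    (f : X → Fin M → ℝ) (hf : Continuous f) (r : Fin M → ℝ)
    (μ1 μ2 : Measure X) [IsProbabilityMeasure μ1] [IsProbabilityMeasure μ2]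
    (ε : ℝ) (hε : 0 < ε)
    (hcov : (Matrix.of fun i j : Fin M =>
        (∫ y, f y i * f y j ∂μ2) - (∫ y, f y i ∂μ2) * (∫ y, f y j ∂μ2)).PosDef)
    (lam : Fin M → ℝ)
    (Sig : Matrix (Fin M) (Fin M) ℝ)
    (hSig : ∀ i j, Sig i j
      = ∫ x, ((∫ y, f y i * f y j ∂(tiltedKernel c f r lam μ2 ε x))
          - (∫ y, f y i ∂(tiltedKernel c f r lam μ2 ε x))
            * (∫ y, f y j ∂(tiltedKernel c f r lam μ2 ε x))) ∂μ1) :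
    Sig.PosDef ∧ ∀ v : Fin M → ℝ, v ⬝ᵥ Sig.mulVec v = 0 → v = 0 := by
  have hfi : ∀ i, Continuous fun y => f y i := fun i => (continuous_apply i).comp hf
  choose Cf hCf0 hCf using fun i => cont_bound (hfi i)
  choose Cff hCff0 hCff using fun i j => cont_bound ((hfi i).mul (hfi j))
  have hφmeas : ∀ i j : Fin M, AEStronglyMeasurable (fun x =>
      (∫ y, f y i * f y j ∂(tiltedKernel c f r lam μ2 ε x))
        - (∫ y, f y i ∂(tiltedKernel c f r lam μ2 ε x))
          * (∫ y, f y j ∂(tiltedKernel c f r lam μ2 ε x))) μ1 :=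
    fun i j => ((tilted_meas hc hf hε ((hfi i).mul (hfi j))).sub
      ((tilted_meas hc hf hε (hfi i)).mul (tilted_meas hc hf hε (hfi j)))).aestronglyMeasurable
  have hφint : ∀ i j : Fin M, Integrable (fun x =>
      (∫ y, f y i * f y j ∂(tiltedKernel c f r lam μ2 ε x))
        - (∫ y, f y i ∂(tiltedKernel c f r lam μ2 ε x))
          * (∫ y, f y j ∂(tiltedKernel c f r lam μ2 ε x))) μ1 := by
    intro i j
    refine (integrable_const (Cff i j + Cf i * Cf j)).mono' (hφmeas i j)
      (Filter.Eventually.of_forall fun x => ?_)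
    rw [Real.norm_eq_abs]
    have h1 := tilted_bdd (μ2 := μ2) (r := r) (lam := lam) hc hf hε _ _ (hCff i j) x
    have h2 := tilted_bdd (μ2 := μ2) (r := r) (lam := lam) hc hf hε _ _ (hCf i) x
    have h3 := tilted_bdd (μ2 := μ2) (r := r) (lam := lam) hc hf hε _ _ (hCf j) x
    calc |(∫ y, f y i * f y j ∂(tiltedKernel c f r lam μ2 ε x))
        - (∫ y, f y i ∂(tiltedKernel c f r lam μ2 ε x))
          * (∫ y, f y j ∂(tiltedKernel c f r lam μ2 ε x))|
        ≤ |(∫ y, f y i * f y j ∂(tiltedKernel c f r lam μ2 ε x))|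
          + |(∫ y, f y i ∂(tiltedKernel c f r lam μ2 ε x))
            * (∫ y, f y j ∂(tiltedKernel c f r lam μ2 ε x))| := abs_sub _ _
      _ ≤ Cff i j + Cf i * Cf j := add_le_add h1 (by
          rw [abs_mul]
          exact mul_le_mul h2 h3 (abs_nonneg _) (hCf0 i))
  have key : ∀ v : Fin M → ℝ, v ≠ 0 → 0 < v ⬝ᵥ Sig.mulVec v := by
    intro v hv
    have hgc : Continuous fun y => ∑ i, v i * f y i :=
      continuous_finset_sum _ fun i _ => continuous_const.mul (hfi i)
    have hWpos : ∀ x, 0 <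
        (∫ y, (∑ i, v i * f y i) * (∑ i, v i * f y i) ∂(tiltedKernel c f r lam μ2 ε x))
          - (∫ y, ∑ i, v i * f y i ∂(tiltedKernel c f r lam μ2 ε x))
            * (∫ y, ∑ i, v i * f y i ∂(tiltedKernel c f r lam μ2 ε x)) := by
      intro x
      haveI := tilted_prob (lam := lam) (r := r) (μ2 := μ2) hc hf hε x
      by_contra hle
      push_neg at hle
      have hae := var_zero (tiltedKernel c f r lam μ2 ε x)
        (cont_integrable hgc _) (cont_integrable (hgc.mul hgc) _) hle
      set m := ∫ z, (∑ i, v i * f z i) ∂(tiltedKernel c f r lam μ2 ε x) with hm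
      have hgm : ∀ᵐ y ∂μ2, (∑ i, v i * f y i) = m := tilted_ae hc hf x hae
      have e1 : ∫ y, ∑ i, v i * f y i ∂μ2 = m := by
        rw [integral_congr_ae (g := fun _ => m) hgm]
        simp
      have e2 : ∫ y, (∑ i, v i * f y i) * (∑ i, v i * f y i) ∂μ2 = m * m := by
        rw [integral_congr_ae (g := fun _ => m * m) (hgm.mono fun y hy => by rw [hy])]
        simp
      have hvar2 := var_expand hf v μ2
      rw [e1, e2] at hvar2
      have hposc : 0 < ∑ i, ∑ j, v i * v j *
          ((∫ y, f y i * f y j ∂μ2) - (∫ y, f y i ∂μ2) * (∫ y, f y j ∂μ2)) := by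
        have h := hcov.dotProduct_mulVec_pos hv
        have hsv : star v = v := funext fun i => star_trivial _
        rw [hsv, dot_mulVec_expand] at h
        simpa [Matrix.of_apply] using h
      rw [← hvar2] at hposc
      linarith
    have hexp : v ⬝ᵥ Sig.mulVec v = ∫ x, (∑ i, ∑ j, v i * v j *
        ((∫ y, f y i * f y j ∂(tiltedKernel c f r lam μ2 ε x))
          - (∫ y, f y i ∂(tiltedKernel c f r lam μ2 ε x))
            * (∫ y, f y j ∂(tiltedKernel c f r lam μ2 ε x)))) ∂μ1 := by
      rw [dot_mulVec_expand,
        integral_finset_sum _ fun i _ => integrable_finset_sum _ fun j _ =>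
          (hφint i j).const_mul _]
      refine Finset.sum_congr rfl fun i _ => ?_
      rw [integral_finset_sum _ fun j _ => (hφint i j).const_mul _]
      refine Finset.sum_congr rfl fun j _ => ?_
      rw [hSig i j, integral_const_mul]
    rw [hexp]
    have hWint : Integrable (fun x => ∑ i, ∑ j, v i * v j *
        ((∫ y, f y i * f y j ∂(tiltedKernel c f r lam μ2 ε x))
          - (∫ y, f y i ∂(tiltedKernel c f r lam μ2 ε x))
            * (∫ y, f y j ∂(tiltedKernel c f r lam μ2 ε x)))) μ1 :=
      integrable_finset_sum _ fun i _ => integrable_finset_sum _ fun j _ =>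
        (hφint i j).const_mul _
    have hWnn : ∀ x, (0:ℝ) ≤ ∑ i, ∑ j, v i * v j *
        ((∫ y, f y i * f y j ∂(tiltedKernel c f r lam μ2 ε x))
          - (∫ y, f y i ∂(tiltedKernel c f r lam μ2 ε x))
            * (∫ y, f y j ∂(tiltedKernel c f r lam μ2 ε x))) := fun x => by
      haveI := tilted_prob (lam := lam) (r := r) (μ2 := μ2) hc hf hε x
      rw [← var_expand hf v (tiltedKernel c f r lam μ2 ε x)]
      exact (hWpos x).le
    rw [integral_pos_iff_support_of_nonneg hWnn hWint]
    have hsupp : (Function.support fun x => ∑ i, ∑ j, v i * v j *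
        ((∫ y, f y i * f y j ∂(tiltedKernel c f r lam μ2 ε x))
          - (∫ y, f y i ∂(tiltedKernel c f r lam μ2 ε x))
            * (∫ y, f y j ∂(tiltedKernel c f r lam μ2 ε x)))) = Set.univ :=
      Set.eq_univ_of_forall fun x => by
        haveI := tilted_prob (lam := lam) (r := r) (μ2 := μ2) hc hf hε x
        rw [Function.mem_support, ← var_expand hf v (tiltedKernel c f r lam μ2 ε x)]
        exact (hWpos x).ne'
    rw [hsupp, measure_univ]
    exact one_pos
  have hsymm : ∀ i j, Sig i j = Sig j i := by
    intro i j
    rw [hSig i j, hSig j i]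
    apply integral_congr_ae
    filter_upwards with x
    have : (∫ y, f y i * f y j ∂(tiltedKernel c f r lam μ2 ε x))
        = ∫ y, f y j * f y i ∂(tiltedKernel c f r lam μ2 ε x) :=
      integral_congr_ae (Filter.Eventually.of_forall fun y => mul_comm _ _)
    rw [this]
    ring
  have hherm : Sig.IsHermitian := Matrix.ext fun i j => by
    rw [Matrix.conjTranspose_apply, star_trivial, hsymm j i]
  refine ⟨Matrix.PosDef.of_dotProduct_mulVec_pos hherm fun v hv => ?_, fun v hveq => ?_⟩
  · have h := key v hv
    rwa [show star v = v from funext fun i => star_trivial _]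
  · by_contra hv
    exact (key v hv).ne' hveq
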